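/- Let h(p) = −p·log₂ p − (1−p)·log₂(1−p) (with h(0) = h(1) = 0). Then: (i) the function g(p) = h(2p) + h(p) is strictly increasing on [0, 1/4]; (ii) g(0.028) < 1/2 < g(0.029); consequently (iii) there is a unique p_crit ∈ (0.028, 0.029) with h(2·p_crit) + h(p_crit) = 1/2, and for p ∈ [0, 1/4] the asymptotic key-rate expression (1/2)·(1/2 − h(2p) − h(p)) is strictly positive if and only if p < p_crit. -/

import Mathlib

open Real

/-- Binary entropy function (in bits): `h(p) = −p·log₂ p − (1−p)·log₂(1−p)`,
with `h(0) = h(1) = 0` (using Lean's convention `logb 2 0 = 0`). -/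
noncomputable def binEnt (p : ℝ) : ℝ :=
  -(p * Real.logb 2 p) - (1 - p) * Real.logb 2 (1 - p)

/-- Taylor bound for log(1-x). -/
lemma log_one_sub_bounds {x : ℝ} (h0 : 0 ≤ x) (h1 : x < 1) :
    -(x + x^2/2 + x^3/3 + x^4/4) - x^5/(1-x) ≤ Real.log (1-x) ∧
    Real.log (1-x) ≤ -(x + x^2/2 + x^3/3 + x^4/4) + x^5/(1-x) := by
  have h := Real.abs_log_sub_add_sum_range_le (x := x)
      (by rw [abs_of_nonneg h0]; exact h1) 4
  simp [Finset.sum_range_succ, abs_of_nonneg h0] at h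
  have h' : |(x + x^2/2 + x^3/3 + x^4/4) + Real.log (1-x)| ≤ x^5/(1-x) := by
    convert h using 2 <;> ring
  rw [abs_le] at h'
  constructor <;> linarith [h'.1, h'.2]

lemma lb944 : (-0.0576297 : ℝ) < Real.log 0.944 ∧ Real.log 0.944 < -0.0576284 := by
  have h := log_one_sub_bounds (x := 0.056) (by norm_num) (by norm_num)
  norm_num at h ⊢
  constructor <;> nlinarith [h.1, h.2]

lemma lb972 : (-0.0283996 : ℝ) < Real.log 0.972 ∧ Real.log 0.972 < -0.0283993 := by
  have h := log_one_sub_bounds (x := 0.028) (by norm_num) (by norm_num)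
  norm_num at h ⊢
  constructor <;> nlinarith [h.1, h.2]

lemma lb896 : (-0.1098259 : ℝ) < Real.log 0.896 ∧ Real.log 0.896 < -0.1097985 := by
  have h := log_one_sub_bounds (x := 0.104) (by norm_num) (by norm_num)
  norm_num at h ⊢
  constructor <;> nlinarith [h.1, h.2]

lemma lb928 : (-0.0747254 : ℝ) < Real.log 0.928 ∧ Real.log 0.928 < -0.0747208 := by
  have h := log_one_sub_bounds (x := 0.072) (by norm_num) (by norm_num)
  norm_num at h ⊢
  constructor <;> nlinarith [h.1, h.2]

lemma lb942 : (-0.0597506 : ℝ) < Real.log 0.942 ∧ Real.log 0.942 < -0.0597490 := by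
  have h := log_one_sub_bounds (x := 0.058) (by norm_num) (by norm_num)
  norm_num at h ⊢
  constructor <;> nlinarith [h.1, h.2]

lemma lb971 : (-0.0294290 : ℝ) < Real.log 0.971 ∧ Real.log 0.971 < -0.0294286 := by
  have h := log_one_sub_bounds (x := 0.029) (by norm_num) (by norm_num)
  norm_num at h ⊢
  constructor <;> nlinarith [h.1, h.2]

lemma log056 : Real.log 0.056 = Real.log 0.896 - 4 * Real.log 2 := by
  have : (0.896 : ℝ) = 0.056 * 2^4 := by norm_num
  rw [this, Real.log_mul (by norm_num) (by positivity), Real.log_pow]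
  push_cast; ring

lemma log028 : Real.log 0.028 = Real.log 0.896 - 5 * Real.log 2 := by
  have : (0.896 : ℝ) = 0.028 * 2^5 := by norm_num
  rw [this, Real.log_mul (by norm_num) (by positivity), Real.log_pow]
  push_cast; ring

lemma log058 : Real.log 0.058 = Real.log 0.928 - 4 * Real.log 2 := by
  have : (0.928 : ℝ) = 0.058 * 2^4 := by norm_num
  rw [this, Real.log_mul (by norm_num) (by positivity), Real.log_pow]
  push_cast; ring

lemma log029 : Real.log 0.029 = Real.log 0.928 - 5 * Real.log 2 := by
  have : (0.928 : ℝ) = 0.029 * 2^5 := by norm_num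
  rw [this, Real.log_mul (by norm_num) (by positivity), Real.log_pow]
  push_cast; ring

noncomputable def gNum (p : ℝ) : ℝ :=
  -((2*p) * Real.log (2*p)) - (1-2*p) * Real.log (1-2*p)
    - p * Real.log p - (1-p) * Real.log (1-p)

lemma hlog2pos : (0:ℝ) < Real.log 2 := Real.log_pos (by norm_num)

lemma g_eq (p : ℝ) : binEnt (2*p) + binEnt p = gNum p / Real.log 2 := by
  have hL := hlog2pos.ne'
  simp only [binEnt, gNum, Real.logb]
  field_simp
  ring

lemma gNum_cont : Continuous gNum := by
  have h := Real.continuous_mul_log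
  unfold gNum
  fun_prop

lemma gNum_hasDeriv {p : ℝ} (hp0 : 0 < p) (hp4 : p < 1/4) :
    HasDerivAt gNum
      (-(2*(Real.log (2*p)+1)) + 2*(Real.log (1-2*p)+1)
        - (Real.log p + 1) + (Real.log (1-p)+1)) p := by
  have h2p : (2:ℝ)*p ≠ 0 := by positivity
  have h12p : (1-2*p) ≠ 0 := by nlinarith
  have h1p : (1-p) ≠ 0 := by nlinarith
  have i1 : HasDerivAt (fun q : ℝ => 2*q) 2 p := by
    simpa using (hasDerivAt_id p).const_mul 2
  have i2 : HasDerivAt (fun q : ℝ => 1-2*q) (-2) p := by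
    simpa using ((hasDerivAt_id p).const_mul 2).const_sub 1
  have d1 : HasDerivAt (fun q : ℝ => (2*q) * Real.log (2*q)) ((Real.log (2*p)+1)*2) p :=
    (Real.hasDerivAt_mul_log h2p).comp p i1
  have d2 : HasDerivAt (fun q : ℝ => (1-2*q) * Real.log (1-2*q)) ((Real.log (1-2*p)+1)*(-2)) p :=
    by have := (Real.hasDerivAt_mul_log h12p).comp p i2; exact this
  have d3 : HasDerivAt (fun q : ℝ => q * Real.log q) (Real.log p + 1) p :=
    Real.hasDerivAt_mul_log hp0.ne'
  have d4 : HasDerivAt (fun q : ℝ => (1-q) * Real.log (1-q)) ((Real.log (1-p)+1)*(-1)) p :=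
    (Real.hasDerivAt_mul_log h1p).comp p ((hasDerivAt_id p).const_sub 1)
  have := ((d1.neg.sub d2).sub d3).sub d4
  rw [show -(2*(Real.log (2*p)+1)) + 2*(Real.log (1-2*p)+1)
          - (Real.log p + 1) + (Real.log (1-p)+1) = -((Real.log (2*p)+1)*2)
          - (Real.log (1-2*p)+1)*(-2) - (Real.log p + 1) - (Real.log (1-p)+1)*(-1) by ring]
  exact this

lemma gNum_mono : StrictMonoOn gNum (Set.Icc (0:ℝ) (1/4)) := by
  apply strictMonoOn_of_deriv_pos (convex_Icc 0 (1/4)) gNum_cont.continuousOn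
  intro p hp
  rw [interior_Icc] at hp
  obtain ⟨hp0, hp4⟩ := hp
  rw [(gNum_hasDeriv hp0 hp4).deriv]
  have h1 : Real.log (2*p) < Real.log (1-2*p) :=
    Real.log_lt_log (by positivity) (by linarith)
  have h2 : Real.log p < Real.log (1-p) :=
    Real.log_lt_log hp0 (by linarith)
  linarith

lemma g_mono : StrictMonoOn (fun p : ℝ => binEnt (2*p) + binEnt p) (Set.Icc (0:ℝ) (1/4)) := by
  intro x hx y hy hxy
  simp only [g_eq]
  exact div_lt_div_of_pos_right (gNum_mono hx hy hxy) hlog2pos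

lemma num1 : binEnt (2 * 0.028) + binEnt 0.028 < 1/2 := by
  rw [g_eq 0.028, div_lt_iff₀ hlog2pos]
  have e1 : gNum 0.028 = -(0.056 * Real.log 0.056) - 0.944 * Real.log 0.944
      - 0.028 * Real.log 0.028 - 0.972 * Real.log 0.972 := by
    unfold gNum; norm_num
  rw [e1]
  have h1 := lb944; have h2 := lb972; have h3 := lb896
  have h4 := log056; have h5 := log028
  have l2a := Real.log_two_gt_d9; have l2b := Real.log_two_lt_d9
  rw [h4, h5]
  nlinarith [h1.1, h1.2, h2.1, h2.2, h3.1, h3.2]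

lemma num2 : 1/2 < binEnt (2 * 0.029) + binEnt 0.029 := by
  rw [g_eq 0.029, lt_div_iff₀ hlog2pos]
  have e1 : gNum 0.029 = -(0.058 * Real.log 0.058) - 0.942 * Real.log 0.942
      - 0.029 * Real.log 0.029 - 0.971 * Real.log 0.971 := by
    unfold gNum; norm_num
  rw [e1]
  have h1 := lb942; have h2 := lb971; have h3 := lb928
  have h4 := log058; have h5 := log029
  have l2a := Real.log_two_gt_d9; have l2b := Real.log_two_lt_d9
  rw [h4, h5]
  nlinarith [h1.1, h1.2, h2.1, h2.2, h3.1, h3.2]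

/-- The critical error rate of the quantum ROT protocol:
(i) `g(p) = h(2p) + h(p)` is strictly increasing on `[0, 1/4]`;
(ii) `g(0.028) < 1/2 < g(0.029)`;
(iii) consequently there is a unique `p_crit ∈ (0.028, 0.029)` with
`h(2·p_crit) + h(p_crit) = 1/2`, and for `p ∈ [0, 1/4]` the asymptotic key rate
`(1/2)·(1/2 − h(2p) − h(p))` is strictly positive iff `p < p_crit`. -/
theorem critical_error_rate :
    StrictMonoOn (fun p : ℝ => binEnt (2 * p) + binEnt p) (Set.Icc (0 : ℝ) (1/4)) ∧
    (binEnt (2 * 0.028) + binEnt 0.028 < 1/2) ∧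
    (1/2 < binEnt (2 * 0.029) + binEnt 0.029) ∧
    ∃ pcrit : ℝ, pcrit ∈ Set.Ioo (0.028 : ℝ) 0.029 ∧
      binEnt (2 * pcrit) + binEnt pcrit = 1/2 ∧
      (∀ q ∈ Set.Ioo (0.028 : ℝ) 0.029, binEnt (2 * q) + binEnt q = 1/2 → q = pcrit) ∧
      ∀ p ∈ Set.Icc (0 : ℝ) (1/4),
        (0 < (1/2) * (1/2 - binEnt (2 * p) - binEnt p) ↔ p < pcrit) := by
  have hmono := g_mono
  have hsub : Set.Icc (0.028:ℝ) 0.029 ⊆ Set.Icc (0:ℝ) (1/4) := by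
    intro z hz; exact ⟨by linarith [hz.1], by linarith [hz.2]⟩
  have hcont : ContinuousOn (fun p : ℝ => binEnt (2*p) + binEnt p)
      (Set.Icc (0.028:ℝ) 0.029) := by
    have : (fun p : ℝ => binEnt (2*p) + binEnt p) = fun p => gNum p / Real.log 2 := by
      funext p; exact g_eq p
    rw [this]
    exact (gNum_cont.div_const _).continuousOn
  have hivt := intermediate_value_Ioo (by norm_num : (0.028:ℝ) ≤ 0.029) hcont
  have hmem : (1/2 : ℝ) ∈ Set.Ioo (binEnt (2*0.028) + binEnt 0.028)
      (binEnt (2*0.029) + binEnt 0.029) := ⟨num1, num2⟩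
  obtain ⟨pcrit, hpc, hpceq0⟩ := hivt hmem
  have hpceq : binEnt (2 * pcrit) + binEnt pcrit = 1/2 := hpceq0
  have hpcIcc : pcrit ∈ Set.Icc (0:ℝ) (1/4) :=
    hsub ⟨hpc.1.le, hpc.2.le⟩
  refine ⟨hmono, num1, num2, pcrit, hpc, hpceq, ?_, ?_⟩
  · intro q hq hqeq
    have hqIcc : q ∈ Set.Icc (0:ℝ) (1/4) := hsub ⟨hq.1.le, hq.2.le⟩
    exact hmono.injOn hqIcc hpcIcc (by
      show binEnt (2*q) + binEnt q = binEnt (2*pcrit) + binEnt pcrit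
      rw [hqeq, hpceq])
  · intro p hp
    have hiff := hmono.lt_iff_lt hp hpcIcc
    constructor
    · intro h
      rw [← hiff]
      linarith [hpceq]
    · intro h
      rw [← hiff] at h
      linarith [hpceq]
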